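/- arXiv:1508.00381 — 2 statements merged into one kernel-verified Lean document; each statement's English description precedes it below -/
import Mathlib

section
/- If f ∈ P_{r,s} and g ∈ P_{r',s'} with r + r' ≥ 2, then the Poisson bracket {f,g} (with respect to the canonical pairs (ρ,λ) and (ξ,η)) belongs to P_{r+r'-2, s+s'}; if r + r' < 2 then {f,g} = 0. -/
noncomputable section

open Real

/-- `β(λ) = 1/√(2 - 2 cos λ)`. -/
def beta (lam : ℝ) : ℝ := 1 / Real.sqrt (2 - 2 * Real.cos lam)

/-- The monomial `ρ^{m1} ξ^{m2} η^{m3} (cos λ)^{k1} (sin λ)^{k2} β(λ)^j`,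
indexed by `(m1, m2, m3, k1, k2, j)`. -/
def mono (idx : ℕ × ℕ × ℕ × ℕ × ℕ × ℕ) (ρ ξ lam η : ℝ) : ℝ :=
  ρ ^ idx.1 * ξ ^ idx.2.1 * η ^ idx.2.2.1 * Real.cos lam ^ idx.2.2.2.1 *
    Real.sin lam ^ idx.2.2.2.2.1 * beta lam ^ idx.2.2.2.2.2

/-- Membership in the class `P_{l,s}`: a finite real linear combination of the monomials
`ρ^{m1} ξ^{m2} η^{m3} (cos λ)^{k1} (sin λ)^{k2} β(λ)^j` with `2 m1 + m2 + m3 = l`,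
`k1 + k2 ≤ l + 4 s - 3` and `j ≤ 2 l + 7 s - 6`, on the domain `cos λ ≠ 1`. -/
def inClassP (l s : ℕ) (g : ℝ → ℝ → ℝ → ℝ → ℝ) : Prop :=
  ∃ c : (ℕ × ℕ × ℕ × ℕ × ℕ × ℕ) →₀ ℝ,
    (∀ idx ∈ c.support,
      2 * idx.1 + idx.2.1 + idx.2.2.1 = l ∧
      idx.2.2.2.1 + idx.2.2.2.2.1 + 3 ≤ l + 4 * s ∧
      idx.2.2.2.2.2 + 6 ≤ 2 * l + 7 * s) ∧
    ∀ ρ ξ lam η : ℝ, Real.cos lam ≠ 1 →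
      g ρ ξ lam η = c.sum fun idx a => a * mono idx ρ ξ lam η

/-- partial derivative with respect to `ρ` -/
def pdRho (f : ℝ → ℝ → ℝ → ℝ → ℝ) (ρ ξ lam η : ℝ) : ℝ := deriv (fun t => f t ξ lam η) ρ
/-- partial derivative with respect to `ξ` -/
def pdXi (f : ℝ → ℝ → ℝ → ℝ → ℝ) (ρ ξ lam η : ℝ) : ℝ := deriv (fun t => f ρ t lam η) ξ
/-- partial derivative with respect to `λ` -/
def pdLam (f : ℝ → ℝ → ℝ → ℝ → ℝ) (ρ ξ lam η : ℝ) : ℝ := deriv (fun t => f ρ ξ t η) lam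
/-- partial derivative with respect to `η` -/
def pdEta (f : ℝ → ℝ → ℝ → ℝ → ℝ) (ρ ξ lam η : ℝ) : ℝ := deriv (fun t => f ρ ξ lam t) η

/-- Canonical Poisson bracket with conjugate pairs `(ρ,λ)` and `(ξ,η)`:
`{f,g} = f_λ g_ρ − f_ρ g_λ + f_η g_ξ − f_ξ g_η`. -/
def pbracket (f g : ℝ → ℝ → ℝ → ℝ → ℝ) : ℝ → ℝ → ℝ → ℝ → ℝ :=
  fun ρ ξ lam η =>
    pdLam f ρ ξ lam η * pdRho g ρ ξ lam η - pdRho f ρ ξ lam η * pdLam g ρ ξ lam η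
    + pdEta f ρ ξ lam η * pdXi g ρ ξ lam η - pdXi f ρ ξ lam η * pdEta g ρ ξ lam η

/-! Weight `2 m1 + m2 + m3`, trigonometric degree `k1 + k2` and `β`-degree `j` of the monomials
add under multiplication. Differentiating in `ρ` lowers the weight by two and in `ξ` or `η` by
one, while, since `β' = -sin λ · β³`, differentiating in `λ` raises the trigonometric degree by one
and the `β`-degree by two. So every term of `{f,g}` has weight `r + r' - 2`, trigonometric degree
at most `(r + 4s - 3) + (r' + 4s' - 3) + 1` and `β`-degree at most
`(2r + 7s - 6) + (2r' + 7s' - 6) + 2`: exactly the bounds of `P_{r+r'-2, s+s'}`. When `r + r' < 2`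
the weight is negative, and no monomial has it. -/

namespace PoissonClass

abbrev PhaseFn : Type := ℝ → ℝ → ℝ → ℝ → ℝ

abbrev Idx : Type := ℕ × ℕ × ℕ × ℕ × ℕ × ℕ

lemma mono_add (i i' : Idx) : mono (i + i') = mono i * mono i' := by
  funext ρ ξ lam η
  simp only [mono, Prod.fst_add, Prod.snd_add, pow_add, Pi.mul_apply]
  ring

/-- `P_{l,s}` is `monoSpan l (l + 4 s - 3) (2 l + 7 s - 6)` up to equality off `cos λ = 1`
(`inClassP_iff`). Integer bounds avoid truncated subtraction and allow negative weights. -/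
def monoSpan (l K J : ℤ) : Submodule ℝ PhaseFn :=
  Submodule.span ℝ (mono '' {i : Idx | 2 * (i.1 : ℤ) + i.2.1 + i.2.2.1 = l ∧
    (i.2.2.2.1 : ℤ) + i.2.2.2.2.1 ≤ K ∧ (i.2.2.2.2.2 : ℤ) ≤ J})

lemma mono_mem_monoSpan {l K J : ℤ} {m1 m2 m3 k1 k2 j : ℕ} (hl : 2 * (m1 : ℤ) + m2 + m3 = l)
    (hK : (k1 : ℤ) + k2 ≤ K) (hJ : (j : ℤ) ≤ J) :
    mono (m1, m2, m3, k1, k2, j) ∈ monoSpan l K J :=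
  Submodule.subset_span ⟨_, ⟨hl, hK, hJ⟩, rfl⟩

lemma natCast_smul_mono_mem_monoSpan {l K J : ℤ} {n m1 m2 m3 k1 k2 j : ℕ}
    (h : n ≠ 0 → 2 * (m1 : ℤ) + m2 + m3 = l ∧ (k1 : ℤ) + k2 ≤ K ∧ (j : ℤ) ≤ J) :
    (n : ℝ) • mono (m1, m2, m3, k1, k2, j) ∈ monoSpan l K J := by
  rcases eq_or_ne n 0 with rfl | hn
  · simp
  · obtain ⟨hl, hK, hJ⟩ := h hn
    exact Submodule.smul_mem _ _ (mono_mem_monoSpan hl hK hJ)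

lemma monoSpan_mono {l K J K' J' : ℤ} (hK : K ≤ K') (hJ : J ≤ J') :
    monoSpan l K J ≤ monoSpan l K' J' :=
  Submodule.span_mono <| Set.image_mono fun _ ⟨hl, hk, hj⟩ => ⟨hl, hk.trans hK, hj.trans hJ⟩

lemma monoSpan_mul_le (l K J l' K' J' : ℤ) :
    monoSpan l K J * monoSpan l' K' J' ≤ monoSpan (l + l') (K + K') (J + J') := by
  rw [monoSpan, monoSpan, Submodule.span_mul_span]
  refine Submodule.span_mono ?_
  rintro _ ⟨_, ⟨i, ⟨hl, hK, hJ⟩, rfl⟩, _, ⟨i', ⟨hl', hK', hJ'⟩, rfl⟩, rfl⟩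
  refine ⟨i + i', ⟨?_, ?_, ?_⟩, mono_add i i'⟩ <;>
    simp only [Prod.fst_add, Prod.snd_add, Nat.cast_add] <;> omega

lemma mul_mem_monoSpan {l K J l' K' J' L K'' J'' : ℤ} {F G : PhaseFn}
    (hF : F ∈ monoSpan l K J) (hG : G ∈ monoSpan l' K' J') (hl : l + l' = L)
    (hK : K + K' ≤ K'') (hJ : J + J' ≤ J'') : F * G ∈ monoSpan L K'' J'' :=
  hl ▸ monoSpan_mono hK hJ (monoSpan_mul_le l K J l' K' J' (Submodule.mul_mem_mul hF hG))

lemma monoSpan_eq_bot {l : ℤ} (hl : l < 0) (K J : ℤ) : monoSpan l K J = ⊥ := by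
  rw [monoSpan, Submodule.span_eq_bot]
  rintro _ ⟨i, ⟨hi, -⟩, rfl⟩
  omega

lemma hasDerivAt_beta {lam : ℝ} (h : Real.cos lam ≠ 1) :
    HasDerivAt beta (-Real.sin lam * beta lam ^ 3) lam := by
  have hpos : 0 < 2 - 2 * Real.cos lam := by
    linarith [lt_of_le_of_ne (Real.cos_le_one lam) h]
  have hsqrt : HasDerivAt (fun t => Real.sqrt (2 - 2 * Real.cos t))
      (2 * Real.sin lam / (2 * Real.sqrt (2 - 2 * Real.cos lam))) lam := by
    simpa using (((Real.hasDerivAt_cos lam).const_mul 2).const_sub 2).sqrt hpos.ne'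
  have hne : Real.sqrt (2 - 2 * Real.cos lam) ≠ 0 := (Real.sqrt_pos.2 hpos).ne'
  have hbeta : beta = fun t => (Real.sqrt (2 - 2 * Real.cos t))⁻¹ := by
    funext t; rw [beta, one_div]
  rw [hbeta]
  refine (hsqrt.inv hne).congr_deriv ?_
  field_simp

lemma hasDerivAt_mono_rho (m1 m2 m3 k1 k2 j : ℕ) (ρ ξ lam η : ℝ) :
    HasDerivAt (fun t => mono (m1, m2, m3, k1, k2, j) t ξ lam η)
      (m1 * mono (m1 - 1, m2, m3, k1, k2, j) ρ ξ lam η) ρ := by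
  refine ((((((hasDerivAt_pow m1 ρ).mul_const (ξ ^ m2)).mul_const (η ^ m3)).mul_const
    (Real.cos lam ^ k1)).mul_const (Real.sin lam ^ k2)).mul_const (beta lam ^ j)).congr_deriv ?_
  simp only [mono]
  ring

lemma hasDerivAt_mono_xi (m1 m2 m3 k1 k2 j : ℕ) (ρ ξ lam η : ℝ) :
    HasDerivAt (fun t => mono (m1, m2, m3, k1, k2, j) ρ t lam η)
      (m2 * mono (m1, m2 - 1, m3, k1, k2, j) ρ ξ lam η) ξ := by
  refine (((((hasDerivAt_pow m2 ξ).const_mul (ρ ^ m1)).mul_const (η ^ m3)).mul_const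
    (Real.cos lam ^ k1)).mul_const (Real.sin lam ^ k2)).mul_const (beta lam ^ j) |>.congr_deriv ?_
  simp only [mono]
  ring

lemma hasDerivAt_mono_eta (m1 m2 m3 k1 k2 j : ℕ) (ρ ξ lam η : ℝ) :
    HasDerivAt (fun t => mono (m1, m2, m3, k1, k2, j) ρ ξ lam t)
      (m3 * mono (m1, m2, m3 - 1, k1, k2, j) ρ ξ lam η) η := by
  refine ((((hasDerivAt_pow m3 η).const_mul (ρ ^ m1 * ξ ^ m2)).mul_const
    (Real.cos lam ^ k1)).mul_const (Real.sin lam ^ k2)).mul_const (beta lam ^ j) |>.congr_deriv ?_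
  simp only [mono]
  ring

lemma hasDerivAt_mono_lam (m1 m2 m3 k1 k2 j : ℕ) (ρ ξ η : ℝ) {lam : ℝ} (h : Real.cos lam ≠ 1) :
    HasDerivAt (fun t => mono (m1, m2, m3, k1, k2, j) ρ ξ t η)
      (-k1 * mono (m1, m2, m3, k1 - 1, k2 + 1, j) ρ ξ lam η
        + k2 * mono (m1, m2, m3, k1 + 1, k2 - 1, j) ρ ξ lam η
        - j * mono (m1, m2, m3, k1, k2 + 1, j + 2) ρ ξ lam η) lam := by
  refine ((((Real.hasDerivAt_cos lam).pow k1).const_mul (ρ ^ m1 * ξ ^ m2 * η ^ m3)).mul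
    ((Real.hasDerivAt_sin lam).pow k2) |>.mul ((hasDerivAt_beta h).pow j)).congr_deriv ?_
  simp only [mono, Pi.mul_apply, Pi.pow_apply]
  rcases j with _ | j
  · simp only [Nat.cast_zero]
    ring
  · simp only [Nat.add_sub_cancel]
    push_cast
    ring

def HasPartialDerivs (F Frho Fxi Flam Feta : PhaseFn) : Prop :=
  ∀ ρ ξ lam η : ℝ, Real.cos lam ≠ 1 →
    HasDerivAt (fun t => F t ξ lam η) (Frho ρ ξ lam η) ρ ∧
    HasDerivAt (fun t => F ρ t lam η) (Fxi ρ ξ lam η) ξ ∧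
    HasDerivAt (fun t => F ρ ξ t η) (Flam ρ ξ lam η) lam ∧
    HasDerivAt (fun t => F ρ ξ lam t) (Feta ρ ξ lam η) η

namespace HasPartialDerivs

variable {f F Frho Fxi Flam Feta G Grho Gxi Glam Geta : PhaseFn}

lemma zero : HasPartialDerivs 0 0 0 0 0 :=
  fun _ _ _ _ _ => ⟨hasDerivAt_const _ _, hasDerivAt_const _ _, hasDerivAt_const _ _,
    hasDerivAt_const _ _⟩

lemma add (hF : HasPartialDerivs F Frho Fxi Flam Feta)
    (hG : HasPartialDerivs G Grho Gxi Glam Geta) :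
    HasPartialDerivs (F + G) (Frho + Grho) (Fxi + Gxi) (Flam + Glam) (Feta + Geta) :=
  fun ρ ξ lam η h =>
  let ⟨hFrho, hFxi, hFlam, hFeta⟩ := hF ρ ξ lam η h
  let ⟨hGrho, hGxi, hGlam, hGeta⟩ := hG ρ ξ lam η h
  ⟨hFrho.add hGrho, hFxi.add hGxi, hFlam.add hGlam, hFeta.add hGeta⟩

lemma const_smul (a : ℝ) (hF : HasPartialDerivs F Frho Fxi Flam Feta) :
    HasPartialDerivs (a • F) (a • Frho) (a • Fxi) (a • Flam) (a • Feta) :=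
  fun ρ ξ lam η h =>
  let ⟨hFrho, hFxi, hFlam, hFeta⟩ := hF ρ ξ lam η h
  ⟨hFrho.const_mul a, hFxi.const_mul a, hFlam.const_mul a, hFeta.const_mul a⟩

lemma congr_of_eqOn (hF : HasPartialDerivs F Frho Fxi Flam Feta)
    (hfF : ∀ ρ ξ lam η : ℝ, Real.cos lam ≠ 1 → f ρ ξ lam η = F ρ ξ lam η) :
    HasPartialDerivs f Frho Fxi Flam Feta := by
  intro ρ ξ lam η h
  obtain ⟨hFrho, hFxi, hFlam, hFeta⟩ := hF ρ ξ lam η h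
  have hopen : IsOpen {t : ℝ | Real.cos t ≠ 1} :=
    isOpen_compl_singleton.preimage Real.continuous_cos
  refine ⟨?_, ?_, hFlam.congr_of_eventuallyEq ?_, ?_⟩
  · simpa only [hfF _ ξ lam η h] using hFrho
  · simpa only [hfF ρ _ lam η h] using hFxi
  · filter_upwards [hopen.mem_nhds h] with t ht using hfF ρ ξ t η ht
  · simpa only [hfF ρ ξ lam _ h] using hFeta

end HasPartialDerivs

lemma hasPartialDerivs_mono (m1 m2 m3 k1 k2 j : ℕ) :
    HasPartialDerivs (mono (m1, m2, m3, k1, k2, j))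
      ((m1 : ℝ) • mono (m1 - 1, m2, m3, k1, k2, j))
      ((m2 : ℝ) • mono (m1, m2 - 1, m3, k1, k2, j))
      (-(k1 : ℝ) • mono (m1, m2, m3, k1 - 1, k2 + 1, j)
        + (k2 : ℝ) • mono (m1, m2, m3, k1 + 1, k2 - 1, j)
        - (j : ℝ) • mono (m1, m2, m3, k1, k2 + 1, j + 2))
      ((m3 : ℝ) • mono (m1, m2, m3 - 1, k1, k2, j)) := fun ρ ξ _ η h =>
  ⟨hasDerivAt_mono_rho .., hasDerivAt_mono_xi .., hasDerivAt_mono_lam m1 m2 m3 k1 k2 j ρ ξ η h,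
    hasDerivAt_mono_eta ..⟩

theorem exists_hasPartialDerivs_of_mem_monoSpan {l K J : ℤ} {F : PhaseFn}
    (hF : F ∈ monoSpan l K J) :
    ∃ Frho ∈ monoSpan (l - 2) K J, ∃ Fxi ∈ monoSpan (l - 1) K J,
    ∃ Flam ∈ monoSpan l (K + 1) (J + 2), ∃ Feta ∈ monoSpan (l - 1) K J,
      HasPartialDerivs F Frho Fxi Flam Feta := by
  induction hF using Submodule.span_induction with
  | mem F hF =>
    obtain ⟨⟨m1, m2, m3, k1, k2, j⟩, ⟨hl, hK, hJ⟩, rfl⟩ := hF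
    dsimp only at hl hK hJ
    refine ⟨_, ?_, _, ?_, _, ?_, _, ?_, hasPartialDerivs_mono m1 m2 m3 k1 k2 j⟩
    · exact natCast_smul_mono_mem_monoSpan fun _ => ⟨by omega, hK, hJ⟩
    · exact natCast_smul_mono_mem_monoSpan fun _ => ⟨by omega, hK, hJ⟩
    · refine sub_mem (add_mem (Submodule.smul_mem _ _ (mono_mem_monoSpan hl ?_ ?_))
        (Submodule.smul_mem _ _ (mono_mem_monoSpan hl ?_ ?_)))
        (Submodule.smul_mem _ _ (mono_mem_monoSpan hl ?_ ?_)) <;> omega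
    · exact natCast_smul_mono_mem_monoSpan fun _ => ⟨by omega, hK, hJ⟩
  | zero => exact ⟨0, zero_mem _, 0, zero_mem _, 0, zero_mem _, 0, zero_mem _,
      HasPartialDerivs.zero⟩
  | add F G _ _ hF hG =>
    obtain ⟨Frho, hFrho, Fxi, hFxi, Flam, hFlam, Feta, hFeta, hF⟩ := hF
    obtain ⟨Grho, hGrho, Gxi, hGxi, Glam, hGlam, Geta, hGeta, hG⟩ := hG
    exact ⟨_, add_mem hFrho hGrho, _, add_mem hFxi hGxi, _, add_mem hFlam hGlam,
      _, add_mem hFeta hGeta, hF.add hG⟩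
  | smul a F _ hF =>
    obtain ⟨Frho, hFrho, Fxi, hFxi, Flam, hFlam, Feta, hFeta, hF⟩ := hF
    exact ⟨_, Submodule.smul_mem _ a hFrho, _, Submodule.smul_mem _ a hFxi,
      _, Submodule.smul_mem _ a hFlam, _, Submodule.smul_mem _ a hFeta, hF.const_smul a⟩

lemma linearCombination_mono_apply (c : Idx →₀ ℝ) (ρ ξ lam η : ℝ) :
    Finsupp.linearCombination ℝ mono c ρ ξ lam η = c.sum fun i a => a * mono i ρ ξ lam η := by
  simp only [Finsupp.linearCombination_apply, Finsupp.sum, Finset.sum_apply, Pi.smul_apply,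
    smul_eq_mul]

theorem inClassP_iff {l s : ℕ} {f : PhaseFn} :
    inClassP l s f ↔ ∃ F ∈ monoSpan l (l + 4 * s - 3) (2 * l + 7 * s - 6),
      ∀ ρ ξ lam η : ℝ, Real.cos lam ≠ 1 → f ρ ξ lam η = F ρ ξ lam η := by
  have hidx : ∀ i : Idx, (2 * i.1 + i.2.1 + i.2.2.1 = l ∧ i.2.2.2.1 + i.2.2.2.2.1 + 3 ≤ l + 4 * s ∧
      i.2.2.2.2.2 + 6 ≤ 2 * l + 7 * s) ↔ (2 * (i.1 : ℤ) + i.2.1 + i.2.2.1 = l ∧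
      (i.2.2.2.1 : ℤ) + i.2.2.2.2.1 ≤ l + 4 * s - 3 ∧ (i.2.2.2.2.2 : ℤ) ≤ 2 * l + 7 * s - 6) := by
    intro i; omega
  simp only [monoSpan, Finsupp.mem_span_image_iff_linearCombination, Finsupp.mem_supported]
  constructor
  · rintro ⟨c, hc, hcf⟩
    refine ⟨_, ⟨c, fun i hi => (hidx i).1 (hc i hi), rfl⟩, fun ρ ξ lam η h => ?_⟩
    rw [hcf ρ ξ lam η h, linearCombination_mono_apply]
  · rintro ⟨_, ⟨c, hc, rfl⟩, hfc⟩
    refine ⟨c, fun i hi => (hidx i).2 (hc hi), fun ρ ξ lam η h => ?_⟩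
    rw [hfc ρ ξ lam η h, linearCombination_mono_apply]

lemma pbracket_eq_of_hasPartialDerivs {f Frho Fxi Flam Feta g Grho Gxi Glam Geta : PhaseFn}
    (hf : HasPartialDerivs f Frho Fxi Flam Feta) (hg : HasPartialDerivs g Grho Gxi Glam Geta)
    {ρ ξ lam η : ℝ} (h : Real.cos lam ≠ 1) :
    pbracket f g ρ ξ lam η
      = (Flam * Grho - Frho * Glam + Feta * Gxi - Fxi * Geta) ρ ξ lam η := by
  obtain ⟨hfrho, hfxi, hflam, hfeta⟩ := hf ρ ξ lam η h
  obtain ⟨hgrho, hgxi, hglam, hgeta⟩ := hg ρ ξ lam η h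
  simp only [pbracket, pdRho, pdXi, pdLam, pdEta, hfrho.deriv, hfxi.deriv, hflam.deriv,
    hfeta.deriv, hgrho.deriv, hgxi.deriv, hglam.deriv, hgeta.deriv]
  rfl

theorem exists_pbracket_eqOn_mem_monoSpan {l K J l' K' J' : ℤ} {f g F G : PhaseFn}
    (hF : F ∈ monoSpan l K J) (hG : G ∈ monoSpan l' K' J')
    (hfF : ∀ ρ ξ lam η : ℝ, Real.cos lam ≠ 1 → f ρ ξ lam η = F ρ ξ lam η)
    (hgG : ∀ ρ ξ lam η : ℝ, Real.cos lam ≠ 1 → g ρ ξ lam η = G ρ ξ lam η) :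
    ∃ B ∈ monoSpan (l + l' - 2) (K + K' + 1) (J + J' + 2),
      ∀ ρ ξ lam η : ℝ, Real.cos lam ≠ 1 → pbracket f g ρ ξ lam η = B ρ ξ lam η := by
  obtain ⟨Frho, hFrho, Fxi, hFxi, Flam, hFlam, Feta, hFeta, hFd⟩ :=
    exists_hasPartialDerivs_of_mem_monoSpan hF
  obtain ⟨Grho, hGrho, Gxi, hGxi, Glam, hGlam, Geta, hGeta, hGd⟩ :=
    exists_hasPartialDerivs_of_mem_monoSpan hG
  refine ⟨_, sub_mem (add_mem (sub_mem ?_ ?_) ?_) ?_, fun ρ ξ lam η h =>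
    pbracket_eq_of_hasPartialDerivs (hFd.congr_of_eqOn hfF) (hGd.congr_of_eqOn hgG) h⟩
  · exact mul_mem_monoSpan hFlam hGrho (by ring) (by linarith) (by linarith)
  · exact mul_mem_monoSpan hFrho hGlam (by ring) (by linarith) (by linarith)
  · exact mul_mem_monoSpan hFeta hGxi (by ring) (by linarith) (by linarith)
  · exact mul_mem_monoSpan hFxi hGeta (by ring) (by linarith) (by linarith)

end PoissonClass

open PoissonClass in
/-- If `f ∈ P_{r,s}` and `g ∈ P_{r',s'}` with `r + r' ≥ 2`, then
`{f,g} ∈ P_{r+r'-2, s+s'}`; if `r + r' < 2` then `{f,g} = 0`. -/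
theorem poisson_bracket_class (r r' s s' : ℕ) (f g : ℝ → ℝ → ℝ → ℝ → ℝ)
    (hf : inClassP r s f) (hg : inClassP r' s' g) :
    (2 ≤ r + r' → inClassP (r + r' - 2) (s + s') (pbracket f g)) ∧
    (r + r' < 2 → ∀ ρ ξ lam η : ℝ, Real.cos lam ≠ 1 → pbracket f g ρ ξ lam η = 0) := by
  obtain ⟨F, hF, hfF⟩ := inClassP_iff.1 hf
  obtain ⟨G, hG, hgG⟩ := inClassP_iff.1 hg
  obtain ⟨B, hB, hfgB⟩ := exists_pbracket_eqOn_mem_monoSpan hF hG hfF hgG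
  constructor
  · intro hr
    refine inClassP_iff.2 ⟨B, ?_, hfgB⟩
    convert hB using 2 <;> push_cast [hr] <;> ring
  · intro hr ρ ξ lam η h
    rw [monoSpan_eq_bot (by omega), Submodule.mem_bot] at hB
    rw [hfgB ρ ξ lam η h, hB]
    rfl
end
end

section
/- Let Z₂ = (ξ²+η²)/2 and let f ∈ P_{r₂,r₁} (with r₁ ≥ 1, r₂ ≥ 0). Then there exist χ ∈ P_{r₂,r₁} and Z ∈ P_{r₂,r₁}, with Z a function only of ρ, (ξ²+η²)/2 and λ, solving the homological equation {Z₂, χ} + f = Z. -/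
noncomputable section

open Real

/-!
The bracket `{Z₂, ·}` only sees the `(ξ, η)`-dependence, on which it acts as the rotation
generator `η ∂_ξ - ξ ∂_η`; this derivation kills `ξ² + η²` and preserves the degree of
homogeneous polynomials. So it suffices to solve, for every monomial,
`rot χ + ξ^a η^b = c (ξ² + η²)^⌊(a+b)/2⌋` with `χ` homogeneous of degree `a + b`; this is a
recursion on `(a, b)` driven by `rot (ξ η^(n+1)) = η^(n+2) - (n+1) ξ² η^n` and
`ξ² = (ξ² + η²) - η²`. Multiplying by the `(ρ, λ)`-factor of each monomial of `f` and summing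
produces `χ` and `Z` in the same class.
-/

namespace MvPolynomial

section rot
variable {R : Type*} [CommRing R]

/-- `y ∂ₓ - x ∂_y`, which is `{(x² + y²)/2, ·}` for the conjugate pair `(x, y)`. -/
def rot : Derivation R (MvPolynomial (Fin 2) R) (MvPolynomial (Fin 2) R) :=
  (X 1 : MvPolynomial (Fin 2) R) • pderiv 0 - (X 0 : MvPolynomial (Fin 2) R) • pderiv 1

lemma rot_apply (p : MvPolynomial (Fin 2) R) :
    rot p = X 1 * pderiv 0 p - X 0 * pderiv 1 p := rfl

@[simp] lemma rot_C (a : R) : rot (C a : MvPolynomial (Fin 2) R) = 0 :=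
  rot.map_algebraMap a

@[simp] lemma rot_X_zero : rot (X 0 : MvPolynomial (Fin 2) R) = X 1 := by
  simp [rot_apply, pderiv_X]

@[simp] lemma rot_X_one : rot (X 1 : MvPolynomial (Fin 2) R) = -X 0 := by
  simp [rot_apply, pderiv_X]

lemma IsHomogeneous.rot {p : MvPolynomial (Fin 2) R} {n : ℕ} (hp : p.IsHomogeneous n) :
    (rot p).IsHomogeneous n := by
  rcases n with _ | n
  · obtain ⟨a, rfl⟩ : ∃ a, p = C a :=
      ⟨_, totalDegree_eq_zero_iff_eq_C.mp (Nat.le_zero.mp hp.totalDegree_le)⟩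
    simpa using isHomogeneous_zero (Fin 2) R 0
  · have h₀ := (isHomogeneous_X R (1 : Fin 2)).mul (hp.pderiv (i := 0))
    have h₁ := (isHomogeneous_X R (0 : Fin 2)).mul (hp.pderiv (i := 1))
    rw [Nat.add_sub_cancel, add_comm] at h₀ h₁
    exact h₀.sub h₁

def sumSq : MvPolynomial (Fin 2) R := X 0 ^ 2 + X 1 ^ 2

lemma isHomogeneous_sumSq : (sumSq : MvPolynomial (Fin 2) R).IsHomogeneous 2 :=
  (isHomogeneous_X_pow _ _).add (isHomogeneous_X_pow _ _)

@[simp] lemma rot_sumSq : rot (sumSq : MvPolynomial (Fin 2) R) = 0 := by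
  simp [sumSq, Derivation.leibniz_pow]
  ring

lemma rot_sumSq_mul (p : MvPolynomial (Fin 2) R) : rot (sumSq * p) = sumSq * rot p := by
  rw [Derivation.leibniz, rot_sumSq, smul_zero, add_zero, smul_eq_mul]

end rot

variable {K : Type*} [Field K] [CharZero K]

lemma exists_rot_add_X_zero_pow_mul_X_one_pow : ∀ a b : ℕ,
    ∃ (χ : MvPolynomial (Fin 2) K) (c : K), χ.IsHomogeneous (a + b) ∧
      rot χ + X 0 ^ a * X 1 ^ b = C c * sumSq ^ ((a + b) / 2)
  | 0, 0 => ⟨0, 1, isHomogeneous_zero _ _ _, by simp⟩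
  | 0, 1 => ⟨-X 0, 0, (isHomogeneous_X _ _).neg, by simp⟩
  | 0, n + 2 => by
    obtain ⟨χ, c, hχ, h⟩ := exists_rot_add_X_zero_pow_mul_X_one_pow 0 n
    simp only [zero_add, pow_zero, one_mul] at hχ h ⊢
    have hu : C ((n + 2 : K)⁻¹) * C (n + 2 : K) = (1 : MvPolynomial (Fin 2) K) := by
      rw [← map_mul, inv_mul_cancel₀ (by norm_cast), map_one]
    refine ⟨C ((n + 2 : K)⁻¹) * (C (n + 1 : K) * (sumSq * χ) - X 0 * X 1 ^ (n + 1)),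
      (n + 2 : K)⁻¹ * (n + 1) * c, ?_, ?_⟩
    · have h₀ := (isHomogeneous_sumSq.mul hχ).C_mul (n + 1 : K)
      have h₁ := (isHomogeneous_X K (0 : Fin 2)).mul (isHomogeneous_X_pow (1 : Fin 2) (n + 1))
      rw [show 2 + n = n + 2 by omega] at h₀
      rw [show 1 + (n + 1) = n + 2 by omega] at h₁
      exact (h₀.sub h₁).C_mul _
    · rw [show (n + 2) / 2 = n / 2 + 1 by omega]
      simp only [map_sub, Derivation.leibniz, rot_sumSq, rot_C, Derivation.leibniz_pow, rot_X_zero,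
        rot_X_one, smul_eq_mul, nsmul_eq_mul, Nat.add_sub_cancel]
      simp only [map_mul, map_add, map_natCast, map_one, map_ofNat, Nat.cast_add, Nat.cast_one,
        sumSq] at h hu ⊢
      linear_combination C ((n + 2 : K)⁻¹) * (n + 1) * (X 0 ^ 2 + X 1 ^ 2) * h - X 1 ^ (n + 2) * hu
  | 1, b => by
    have hu : C ((b + 1 : K)⁻¹) * C (b + 1 : K) = (1 : MvPolynomial (Fin 2) K) := by
      rw [← map_mul, inv_mul_cancel₀ (by norm_cast), map_one]
    refine ⟨C ((b + 1 : K)⁻¹) * X 1 ^ (b + 1), 0, ?_, ?_⟩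
    · rw [add_comm 1 b]
      exact isHomogeneous_C_mul_X_pow _ _ _
    · simp only [Derivation.leibniz, rot_C, Derivation.leibniz_pow, rot_X_one, smul_eq_mul,
        nsmul_eq_mul, Nat.add_sub_cancel]
      simp only [map_zero, map_add, map_natCast, map_one, Nat.cast_add, Nat.cast_one] at hu ⊢
      linear_combination -(X 0 * X 1 ^ b) * hu
  | m + 2, b => by
    obtain ⟨χ₁, c₁, hχ₁, h₁⟩ := exists_rot_add_X_zero_pow_mul_X_one_pow m b
    obtain ⟨χ₂, c₂, hχ₂, h₂⟩ := exists_rot_add_X_zero_pow_mul_X_one_pow m (b + 2)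
    refine ⟨sumSq * χ₁ - χ₂, c₁ - c₂, ?_, ?_⟩
    · have h := isHomogeneous_sumSq.mul hχ₁
      rw [show 2 + (m + b) = m + 2 + b by omega] at h
      rw [show m + (b + 2) = m + 2 + b by omega] at hχ₂
      exact h.sub hχ₂
    · rw [map_sub, rot_sumSq_mul, show (m + 2 + b) / 2 = (m + b) / 2 + 1 by omega]
      rw [show (m + (b + 2)) / 2 = (m + b) / 2 + 1 by omega] at h₂
      simp only [map_sub, sumSq] at h₁ h₂ ⊢
      linear_combination (X 0 ^ 2 + X 1 ^ 2) * h₁ - h₂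

lemma hasDerivAt_eval_update {𝕜 σ : Type*} [NontriviallyNormedField 𝕜] [DecidableEq σ]
    (p : MvPolynomial σ 𝕜) (x : σ → 𝕜) (i : σ) (t : 𝕜) :
    HasDerivAt (fun s => eval (Function.update x i s) p)
      (eval (Function.update x i t) (pderiv i p)) t := by
  induction p using MvPolynomial.induction_on with
  | C a => simpa using hasDerivAt_const t a
  | add p q hp hq => simpa only [map_add] using hp.fun_add hq
  | mul_X p j hp =>
    have hX : HasDerivAt (fun s => Function.update x i s j)
        (eval (Function.update x i t) (pderiv i (X j))) t := by
      by_cases hj : j = i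
      · subst hj
        simpa using hasDerivAt_id' t
      · simpa [Function.update_of_ne hj, pderiv_X_of_ne hj] using hasDerivAt_const t (x j)
    simp only [eval_mul, eval_X]
    refine (hp.mul hX).congr_deriv ?_
    simp only [pderiv_mul, eval_add, eval_mul, eval_X]

lemma hasDerivAt_eval_vecCons_zero {𝕜 : Type*} [NontriviallyNormedField 𝕜]
    (p : MvPolynomial (Fin 2) 𝕜) (x y : 𝕜) :
    HasDerivAt (fun t => eval ![t, y] p) (eval ![x, y] (pderiv 0 p)) x := by
  have h (s : 𝕜) : Function.update ![x, y] 0 s = ![s, y] := by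
    ext k; fin_cases k <;> simp
  simpa [h] using hasDerivAt_eval_update p ![x, y] 0 x

lemma hasDerivAt_eval_vecCons_one {𝕜 : Type*} [NontriviallyNormedField 𝕜]
    (p : MvPolynomial (Fin 2) 𝕜) (x y : 𝕜) :
    HasDerivAt (fun t => eval ![x, t] p) (eval ![x, y] (pderiv 1 p)) y := by
  have h (s : 𝕜) : Function.update ![x, y] 1 s = ![x, s] := by
    ext k; fin_cases k <;> simp
  simpa [h] using hasDerivAt_eval_update p ![x, y] 1 y

end MvPolynomial

open MvPolynomial

def rhoLamFactor (idx : ℕ × ℕ × ℕ × ℕ × ℕ × ℕ) (ρ lam : ℝ) : ℝ :=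
  ρ ^ idx.1 * Real.cos lam ^ idx.2.2.2.1 * Real.sin lam ^ idx.2.2.2.2.1 * beta lam ^ idx.2.2.2.2.2

/-- `∑ c idx • mono idx` with the factor `ξ^m2 η^m3` of each monomial replaced by the
polynomial `Q idx` evaluated at `(ξ, η)`. -/
def liftPoly (c : (ℕ × ℕ × ℕ × ℕ × ℕ × ℕ) →₀ ℝ)
    (Q : ℕ × ℕ × ℕ × ℕ × ℕ × ℕ → MvPolynomial (Fin 2) ℝ) (ρ ξ lam η : ℝ) : ℝ :=
  ∑ idx ∈ c.support, c idx * (rhoLamFactor idx ρ lam * eval ![ξ, η] (Q idx))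

section liftPoly
variable (c : (ℕ × ℕ × ℕ × ℕ × ℕ × ℕ) →₀ ℝ) (ρ ξ lam η : ℝ)

lemma finsuppSum_mul_mono_eq_liftPoly :
    (c.sum fun idx a => a * mono idx ρ ξ lam η) =
      liftPoly c (fun idx => X 0 ^ idx.2.1 * X 1 ^ idx.2.2.1) ρ ξ lam η := by
  refine Finset.sum_congr rfl fun idx _ => ?_
  simp only [mono, rhoLamFactor, map_mul, map_pow, eval_X, Matrix.cons_val_zero,
    Matrix.cons_val_one]
  ring

lemma liftPoly_add (Q Q' : ℕ × ℕ × ℕ × ℕ × ℕ × ℕ → MvPolynomial (Fin 2) ℝ) :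
    liftPoly c Q ρ ξ lam η + liftPoly c Q' ρ ξ lam η =
      liftPoly c (fun idx => Q idx + Q' idx) ρ ξ lam η := by
  simp only [liftPoly, ← Finset.sum_add_distrib, map_add, mul_add]

lemma hasDerivAt_liftPoly_xi (Q : ℕ × ℕ × ℕ × ℕ × ℕ × ℕ → MvPolynomial (Fin 2) ℝ) :
    HasDerivAt (fun t => liftPoly c Q ρ t lam η)
      (liftPoly c (fun idx => pderiv 0 (Q idx)) ρ ξ lam η) ξ :=
  HasDerivAt.fun_sum fun idx _ =>
    ((hasDerivAt_eval_vecCons_zero (Q idx) ξ η).const_mul _).const_mul _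

lemma hasDerivAt_liftPoly_eta (Q : ℕ × ℕ × ℕ × ℕ × ℕ × ℕ → MvPolynomial (Fin 2) ℝ) :
    HasDerivAt (fun t => liftPoly c Q ρ ξ lam t)
      (liftPoly c (fun idx => pderiv 1 (Q idx)) ρ ξ lam η) η :=
  HasDerivAt.fun_sum fun idx _ =>
    ((hasDerivAt_eval_vecCons_one (Q idx) ξ η).const_mul _).const_mul _

lemma pbracket_halfSumSq_liftPoly (Q : ℕ × ℕ × ℕ × ℕ × ℕ × ℕ → MvPolynomial (Fin 2) ℝ) :
    pbracket (fun _ ξ' _ η' => (ξ' ^ 2 + η' ^ 2) / 2) (liftPoly c Q) ρ ξ lam η =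
      liftPoly c (fun idx => rot (Q idx)) ρ ξ lam η := by
  have hξ : HasDerivAt (fun t => (t ^ 2 + η ^ 2) / 2) ξ ξ := by
    simpa using ((hasDerivAt_pow 2 ξ).add_const (η ^ 2)).div_const 2
  have hη : HasDerivAt (fun t => (ξ ^ 2 + t ^ 2) / 2) η η := by
    simpa using ((hasDerivAt_pow 2 η).const_add (ξ ^ 2)).div_const 2
  simp only [pbracket, pdLam, pdRho, pdXi, pdEta, deriv_const', hξ.deriv, hη.deriv,
    (hasDerivAt_liftPoly_xi c ρ ξ lam η Q).deriv, (hasDerivAt_liftPoly_eta c ρ ξ lam η Q).deriv]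
  simp only [liftPoly, zero_mul, sub_self, zero_add, Finset.mul_sum, ← Finset.sum_sub_distrib,
    rot_apply, map_sub, map_mul, eval_X, Matrix.cons_val_zero, Matrix.cons_val_one]
  exact Finset.sum_congr rfl fun _ _ => by ring

end liftPoly

section inClassP
variable {l s : ℕ}

lemma inClassP.congr {f g : ℝ → ℝ → ℝ → ℝ → ℝ} (hf : inClassP l s f)
    (h : ∀ ρ ξ lam η, Real.cos lam ≠ 1 → f ρ ξ lam η = g ρ ξ lam η) : inClassP l s g := by
  obtain ⟨c, hc, hfc⟩ := hf
  exact ⟨c, hc, fun ρ ξ lam η hcos => (h ρ ξ lam η hcos) ▸ hfc ρ ξ lam η hcos⟩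

lemma inClassP_zero : inClassP l s fun _ _ _ _ => 0 :=
  ⟨0, by simp, fun _ _ _ _ _ => by rw [Finsupp.sum_zero_index]⟩

lemma inClassP.add {f g : ℝ → ℝ → ℝ → ℝ → ℝ} (hf : inClassP l s f) (hg : inClassP l s g) :
    inClassP l s fun ρ ξ lam η => f ρ ξ lam η + g ρ ξ lam η := by
  obtain ⟨c₁, hc₁, hf⟩ := hf
  obtain ⟨c₂, hc₂, hg⟩ := hg
  refine ⟨c₁ + c₂, fun idx hidx => ?_, fun ρ ξ lam η hcos => ?_⟩
  · rcases Finset.mem_union.1 (Finsupp.support_add hidx) with h | h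
    exacts [hc₁ idx h, hc₂ idx h]
  · dsimp only
    rw [hf ρ ξ lam η hcos, hg ρ ξ lam η hcos,
      Finsupp.sum_add_index (fun _ _ => zero_mul _) (fun _ _ _ _ => add_mul _ _ _)]

lemma inClassP_finsetSum {ι : Type*} (t : Finset ι) {F : ι → ℝ → ℝ → ℝ → ℝ → ℝ}
    (hF : ∀ i ∈ t, inClassP l s (F i)) :
    inClassP l s fun ρ ξ lam η => ∑ i ∈ t, F i ρ ξ lam η := by
  classical
  induction t using Finset.induction_on with
  | empty => simpa using inClassP_zero
  | insert i t hi ih =>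
    have hFt : inClassP l s fun ρ ξ lam η => ∑ i ∈ t, F i ρ ξ lam η :=
      ih fun j hj => hF j (t.mem_insert_of_mem hj)
    refine ((hF i (t.mem_insert_self i)).add hFt).congr fun ρ ξ lam η _ => ?_
    rw [Finset.sum_insert hi]

lemma inClassP.const_mul {f : ℝ → ℝ → ℝ → ℝ → ℝ} (hf : inClassP l s f) (r : ℝ) :
    inClassP l s fun ρ ξ lam η => r * f ρ ξ lam η := by
  obtain ⟨c, hc, hf⟩ := hf
  refine ⟨r • c, fun idx hidx => hc idx (Finsupp.support_smul hidx), fun ρ ξ lam η hcos => ?_⟩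
  dsimp only
  rw [hf ρ ξ lam η hcos, Finsupp.mul_sum, Finsupp.sum_smul_index fun _ => zero_mul _]
  exact Finsupp.sum_congr fun _ _ => (mul_assoc _ _ _).symm

lemma inClassP_const_mul_mono (r : ℝ) {idx : ℕ × ℕ × ℕ × ℕ × ℕ × ℕ}
    (hd : 2 * idx.1 + idx.2.1 + idx.2.2.1 = l) (hk : idx.2.2.2.1 + idx.2.2.2.2.1 + 3 ≤ l + 4 * s)
    (hj : idx.2.2.2.2.2 + 6 ≤ 2 * l + 7 * s) :
    inClassP l s fun ρ ξ lam η => r * mono idx ρ ξ lam η := by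
  refine ⟨Finsupp.single idx r, fun idx' hidx' => ?_, fun ρ ξ lam η _ => ?_⟩
  · rw [Finset.mem_singleton.1 (Finsupp.support_single_subset hidx')]
    exact ⟨hd, hk, hj⟩
  · rw [Finsupp.sum_single_index (zero_mul _)]

lemma inClassP_rhoLamFactor_mul_eval {idx : ℕ × ℕ × ℕ × ℕ × ℕ × ℕ} {d : ℕ}
    {q : MvPolynomial (Fin 2) ℝ} (hq : q.IsHomogeneous d) (hd : 2 * idx.1 + d = l)
    (hk : idx.2.2.2.1 + idx.2.2.2.2.1 + 3 ≤ l + 4 * s) (hj : idx.2.2.2.2.2 + 6 ≤ 2 * l + 7 * s) :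
    inClassP l s fun ρ ξ lam η => rhoLamFactor idx ρ lam * eval ![ξ, η] q := by
  refine (inClassP_finsetSum q.support (F := fun e ρ ξ lam η =>
    coeff e q * mono (idx.1, e 0, e 1, idx.2.2.2) ρ ξ lam η) fun e he => ?_).congr ?_
  · have hdeg : e 0 + e 1 = d := by
      simpa [Finsupp.weight_apply, Finsupp.sum_fintype, Fin.sum_univ_two] using
        hq (mem_support_iff.mp he)
    exact inClassP_const_mul_mono _ (by simp only; omega) hk hj
  · intro ρ ξ lam η _
    rw [eval_eq', Finset.mul_sum]
    refine Finset.sum_congr rfl fun e _ => ?_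
    simp only [mono, rhoLamFactor, Fin.prod_univ_two, Matrix.cons_val_zero, Matrix.cons_val_one]
    ring

lemma inClassP_liftPoly {c : (ℕ × ℕ × ℕ × ℕ × ℕ × ℕ) →₀ ℝ}
    (hc : ∀ idx ∈ c.support, 2 * idx.1 + idx.2.1 + idx.2.2.1 = l ∧
      idx.2.2.2.1 + idx.2.2.2.2.1 + 3 ≤ l + 4 * s ∧ idx.2.2.2.2.2 + 6 ≤ 2 * l + 7 * s)
    {Q : ℕ × ℕ × ℕ × ℕ × ℕ × ℕ → MvPolynomial (Fin 2) ℝ}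
    (hQ : ∀ idx ∈ c.support, (Q idx).IsHomogeneous (idx.2.1 + idx.2.2.1)) :
    inClassP l s (liftPoly c Q) := by
  refine inClassP_finsetSum c.support fun idx hidx => ?_
  obtain ⟨hd, hk, hj⟩ := hc idx hidx
  exact (inClassP_rhoLamFactor_mul_eval (hQ idx hidx) (by omega) hk hj).const_mul (c idx)

end inClassP

theorem homological_equation_general (r1 r2 : ℕ) (f : ℝ → ℝ → ℝ → ℝ → ℝ)
    (hf : inClassP r2 r1 f) :
    ∃ χ Z : ℝ → ℝ → ℝ → ℝ → ℝ,
      inClassP r2 r1 χ ∧ inClassP r2 r1 Z ∧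
      (∃ W : ℝ → ℝ → ℝ → ℝ, ∀ ρ ξ lam η : ℝ, Z ρ ξ lam η = W ρ ((ξ ^ 2 + η ^ 2) / 2) lam) ∧
      ∀ ρ ξ lam η : ℝ, Real.cos lam ≠ 1 →
        pbracket (fun _ ξ' _ η' => (ξ' ^ 2 + η' ^ 2) / 2) χ ρ ξ lam η + f ρ ξ lam η
          = Z ρ ξ lam η := by
  obtain ⟨c, hc, hf⟩ := hf
  choose χ z hχ hχz using exists_rot_add_X_zero_pow_mul_X_one_pow (K := ℝ)
  refine ⟨liftPoly c fun idx => χ idx.2.1 idx.2.2.1,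
    liftPoly c fun idx => C (z idx.2.1 idx.2.2.1) * sumSq ^ ((idx.2.1 + idx.2.2.1) / 2),
    inClassP_liftPoly hc fun idx _ => hχ _ _, inClassP_liftPoly hc fun idx _ => ?_,
    ⟨fun ρ g lam => ∑ idx ∈ c.support, c idx *
      (rhoLamFactor idx ρ lam * (z idx.2.1 idx.2.2.1 * (2 * g) ^ ((idx.2.1 + idx.2.2.1) / 2))),
      fun ρ ξ lam η => ?_⟩,
    fun ρ ξ lam η hcos => ?_⟩
  · rw [← hχz]
    exact (hχ _ _).rot.add ((isHomogeneous_X_pow _ _).mul (isHomogeneous_X_pow _ _))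
  · simp only [liftPoly, map_mul, map_pow, eval_C, sumSq, map_add, eval_X, Matrix.cons_val_zero,
      Matrix.cons_val_one]
    exact Finset.sum_congr rfl fun _ _ => by ring
  · rw [pbracket_halfSumSq_liftPoly, hf ρ ξ lam η hcos, finsuppSum_mul_mono_eq_liftPoly,
      liftPoly_add]
    simp only [hχz]

/-- Solution of the homological equation: with `Z₂ = (ξ²+η²)/2` and `f ∈ P_{r₂,r₁}`
(`r₁ ≥ 1`), there exist `χ ∈ P_{r₂,r₁}` and `Z ∈ P_{r₂,r₁}`, with `Z` a function only of
`ρ`, `Γ = (ξ²+η²)/2` and `λ`, such that `{Z₂, χ} + f = Z`. -/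
theorem homological_equation (r1 r2 : ℕ) (hr1 : 1 ≤ r1) (f : ℝ → ℝ → ℝ → ℝ → ℝ)
    (hf : inClassP r2 r1 f) :
    ∃ χ Z : ℝ → ℝ → ℝ → ℝ → ℝ,
      inClassP r2 r1 χ ∧ inClassP r2 r1 Z ∧
      (∃ W : ℝ → ℝ → ℝ → ℝ, ∀ ρ ξ lam η : ℝ, Z ρ ξ lam η = W ρ ((ξ ^ 2 + η ^ 2) / 2) lam) ∧
      ∀ ρ ξ lam η : ℝ, Real.cos lam ≠ 1 →
        pbracket (fun _ ξ' _ η' => (ξ' ^ 2 + η' ^ 2) / 2) χ ρ ξ lam η + f ρ ξ lam η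
          = Z ρ ξ lam η :=
  homological_equation_general r1 r2 f hf
end
end
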